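/- Let p be an odd prime, G = GL₂(F_p), T' a non-split torus with normalizer N', and B₊ the upper triangular Borel. Then pr_{N'} + pr_{B₊} − pr_G is an idempotent in ℚ[G]; equivalently (since T'B₊ = G) pr_{N'}·pr_{B₊} = pr_G = pr_{B₊}·pr_{N'}. -/

import Mathlib

open Module Matrix

variable (p : ℕ) [Fact p.Prime]

/-- The Borel subgroup `B₊` of upper triangular matrices in `GL₂(𝔽_p)`. -/
def Bplus : Subgroup (GL (Fin 2) (ZMod p)) where
  carrier := {g | (g : Matrix (Fin 2) (Fin 2) (ZMod p)) 1 0 = 0}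
  one_mem' := by simp [Matrix.one_apply]
  mul_mem' := by
    intro a b ha hb
    simp only [Set.mem_setOf_eq, Units.val_mul, Matrix.mul_apply, Fin.sum_univ_two] at *
    simp [ha, hb]
  inv_mem' := by
    intro a ha
    simp only [Set.mem_setOf_eq] at *
    rw [Matrix.coe_units_inv, Matrix.inv_def]
    simp [Matrix.adjugate_fin_two, ha]

/-- The Borel subgroup `B₋` of lower triangular matrices in `GL₂(𝔽_p)`. -/
def Bminus : Subgroup (GL (Fin 2) (ZMod p)) where
  carrier := {g | (g : Matrix (Fin 2) (Fin 2) (ZMod p)) 0 1 = 0}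
  one_mem' := by simp [Matrix.one_apply]
  mul_mem' := by
    intro a b ha hb
    simp only [Set.mem_setOf_eq, Units.val_mul, Matrix.mul_apply, Fin.sum_univ_two] at *
    simp [ha, hb]
  inv_mem' := by
    intro a ha
    simp only [Set.mem_setOf_eq] at *
    rw [Matrix.coe_units_inv, Matrix.inv_def]
    simp [Matrix.adjugate_fin_two, ha]

/-- The split maximal torus `T = B₊ ∩ B₋` of diagonal matrices in `GL₂(𝔽_p)`. -/
def Tsplit : Subgroup (GL (Fin 2) (ZMod p)) := Bplus p ⊓ Bminus p

/-- The embedding `𝔽_{p²}^× → GL₂(𝔽_p)` given by a choice of an `𝔽_p`-basis `b`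
of `𝔽_{p²}` (each `z` acts by multiplication on `𝔽_{p²} ≅ 𝔽_p²`). -/
noncomputable def torusHom (b : Basis (Fin 2) (ZMod p) (GaloisField p 2)) :
    (GaloisField p 2)ˣ →* GL (Fin 2) (ZMod p) :=
  Units.map (((LinearMap.toMatrixAlgEquiv b).toAlgHom.comp
    (Algebra.lmul (ZMod p) (GaloisField p 2))).toRingHom.toMonoidHom)

/-- The non-split maximal torus `T' ≅ 𝔽_{p²}^×`. -/
noncomputable def Tnonsplit (b : Basis (Fin 2) (ZMod p) (GaloisField p 2)) :
    Subgroup (GL (Fin 2) (ZMod p)) := (torusHom p b).range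

/-- `pr_H = (1/|H|) ∑_{h ∈ H} h` in the rational group algebra `ℚ[G]`. -/
noncomputable def pr {G : Type*} [Group G] [Fintype G] (H : Subgroup G) :
    MonoidAlgebra ℚ G :=
  (Nat.card H : ℚ)⁻¹ • ∑ h ∈ (Set.toFinite (H : Set G)).toFinset, MonoidAlgebra.of ℚ G h

/-!
If `HK = G` for subgroups `H, K` of a finite group `G`, then `pr_H · pr_K` is invariant under
left translation by `H` and right translation by `K`, so its coefficients are constant on the
single double coset `HK = G`: it is a scalar multiple of `pr_G`, and the scalar is `1` because
`pr_G` absorbs `pr_H` and `pr_K`.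

For `G = GL₂(𝔽_p)`, the torus `T' ≅ 𝔽_{p²}^×` acts simply transitively on `𝔽_p² ∖ 0`, so every
`g` is `n · (n⁻¹ g)` with `n ∈ T'` sending `e₁` to `g e₁`; then `n⁻¹ g` fixes `e₁` and lies in
`B₊`. Hence `N'B₊ = G = B₊N'`, and `pr_{N'} + pr_{B₊} - pr_G = a + b - ab` for the commuting
idempotents `a = pr_{N'}`, `b = pr_{B₊}`.
-/

open scoped Pointwise

lemma Subgroup.coe_mul_coe_eq_univ_comm {G : Type*} [Group G] {H K : Subgroup G}
    (hHK : (H : Set G) * (K : Set G) = Set.univ) : (K : Set G) * (H : Set G) = Set.univ := by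
  simpa [_root_.mul_inv_rev] using congrArg (·⁻¹) hHK

section GroupAlgebra

variable {G : Type*} [Group G] [Fintype G]

lemma card_toFinset_subgroup (H : Subgroup G) :
    (Set.toFinite (H : Set G)).toFinset.card = Nat.card H := by
  rw [← Set.ncard_eq_toFinset_card, ← Nat.card_coe_set_eq]; rfl

lemma of_mul_pr {H : Subgroup G} {g : G} (hg : g ∈ H) :
    MonoidAlgebra.of ℚ G g * pr H = pr H := by
  rw [pr, mul_smul_comm, Finset.mul_sum]
  congr 1
  refine Finset.sum_equiv (Equiv.mulLeft g) (fun h => ?_) (fun h _ => (map_mul _ g h).symm)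
  simpa using (mul_mem_cancel_left hg).symm

lemma pr_mul_of {H : Subgroup G} {g : G} (hg : g ∈ H) :
    pr H * MonoidAlgebra.of ℚ G g = pr H := by
  rw [pr, smul_mul_assoc, Finset.sum_mul]
  congr 1
  refine Finset.sum_equiv (Equiv.mulRight g) (fun h => ?_) (fun h _ => (map_mul _ h g).symm)
  simpa using (mul_mem_cancel_right hg).symm

lemma pr_mul_pr_of_le {H K : Subgroup G} (hHK : H ≤ K) : pr H * pr K = pr K := by
  rw [pr, smul_mul_assoc, Finset.sum_mul,
    Finset.sum_congr rfl fun h hh => of_mul_pr (hHK (by simpa using hh)), Finset.sum_const,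
    card_toFinset_subgroup, ← Nat.cast_smul_eq_nsmul ℚ, smul_smul,
    inv_mul_cancel₀ (Nat.cast_ne_zero.mpr Nat.card_pos.ne'), one_smul]

lemma pr_mul_pr_of_ge {H K : Subgroup G} (hKH : K ≤ H) : pr H * pr K = pr H := by
  rw [pr.eq_1 K, mul_smul_comm, Finset.mul_sum,
    Finset.sum_congr rfl fun k hk => pr_mul_of (hKH (by simpa using hk)), Finset.sum_const,
    card_toFinset_subgroup, ← Nat.cast_smul_eq_nsmul ℚ, smul_smul,
    inv_mul_cancel₀ (Nat.cast_ne_zero.mpr Nat.card_pos.ne'), one_smul]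

lemma isIdempotentElem_pr (H : Subgroup G) : IsIdempotentElem (pr H) :=
  pr_mul_pr_of_le le_rfl

lemma coeff_pr_top (g : G) : (pr (⊤ : Subgroup G)).coeff g = (Nat.card G : ℚ)⁻¹ := by
  classical
  simp [pr, Finsupp.single_apply]

lemma pr_top_ne_zero : pr (⊤ : Subgroup G) ≠ 0 := fun h => by
  simpa [h, eq_comm] using coeff_pr_top (1 : G)

lemma eq_smul_pr_top_of_coeff_eq {x : MonoidAlgebra ℚ G} (hx : ∀ g, x.coeff g = x.coeff 1) :
    x = (Nat.card G * x.coeff 1) • pr ⊤ := by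
  ext g
  rw [MonoidAlgebra.coeff_smul_apply, coeff_pr_top, hx, smul_eq_mul,
    mul_comm (Nat.card G : ℚ), mul_inv_cancel_right₀ (Nat.cast_ne_zero.mpr Nat.card_pos.ne')]

lemma pr_mul_pr_of_mul_eq_univ {H K : Subgroup G} (hHK : (H : Set G) * (K : Set G) = Set.univ) :
    pr H * pr K = pr ⊤ := by
  set x := pr H * pr K
  have hconst : ∀ g, x.coeff g = x.coeff 1 := by
    intro g
    obtain ⟨h, hh, k, hk, rfl⟩ : g ∈ (H : Set G) * (K : Set G) := hHK ▸ Set.mem_univ g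
    calc x.coeff (h * k)
        = (MonoidAlgebra.of ℚ G h * x).coeff (h * k) := by rw [← mul_assoc, of_mul_pr hh]
      _ = x.coeff k := by simp
      _ = (x * MonoidAlgebra.of ℚ G k).coeff k := by rw [mul_assoc, pr_mul_of hk]
      _ = x.coeff 1 := by simp
  have hx := eq_smul_pr_top_of_coeff_eq hconst
  set c : ℚ := Nat.card G * x.coeff 1
  have hc : c • pr (⊤ : Subgroup G) = (1 : ℚ) • pr ⊤ := by
    calc c • pr (⊤ : Subgroup G)
        = pr ⊤ * (c • pr ⊤) := by rw [mul_smul_comm, (isIdempotentElem_pr _).eq]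
      _ = pr ⊤ * x := by rw [← hx]
      _ = (1 : ℚ) • pr ⊤ := by
        rw [← mul_assoc, pr_mul_pr_of_ge le_top, pr_mul_pr_of_ge le_top, one_smul]
  rw [hx, smul_left_injective ℚ pr_top_ne_zero hc, one_smul]

end GroupAlgebra

section TorusBorel

variable (b : Basis (Fin 2) (ZMod p) (GaloisField p 2))

lemma torusHom_mulVec_repr (u : (GaloisField p 2)ˣ) (w : GaloisField p 2) :
    (torusHom p b u : Matrix (Fin 2) (Fin 2) (ZMod p)) *ᵥ b.repr w = b.repr (u * w) :=
  LinearMap.toMatrix_mulVec_repr b b _ w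

lemma exists_torusHom_mulVec_eq {v w : Fin 2 → ZMod p} (hv : v ≠ 0) (hw : w ≠ 0) :
    ∃ u, (torusHom p b u : Matrix (Fin 2) (Fin 2) (ZMod p)) *ᵥ v = w := by
  have hv' : b.equivFun.symm v ≠ 0 := b.equivFun.symm.map_ne_zero_iff.mpr hv
  have hw' : b.equivFun.symm w ≠ 0 := b.equivFun.symm.map_ne_zero_iff.mpr hw
  refine ⟨Units.mk0 _ (div_ne_zero hw' hv'), ?_⟩
  have key := torusHom_mulVec_repr p b (Units.mk0 _ (div_ne_zero hw' hv')) (b.equivFun.symm v)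
  rw [Units.val_mk0, div_mul_cancel₀ _ hv'] at key
  simpa only [← b.equivFun_apply, LinearEquiv.apply_symm_apply] using key

lemma Tnonsplit_mul_Bplus :
    (Tnonsplit p b : Set (GL (Fin 2) (ZMod p))) * (Bplus p : Set (GL (Fin 2) (ZMod p))) =
      Set.univ := by
  refine Set.eq_univ_of_forall fun g => ?_
  set e : Fin 2 → ZMod p := Pi.single 0 1
  have he : e ≠ 0 := Pi.single_ne_zero_iff.mpr one_ne_zero
  have hge : (g : Matrix (Fin 2) (Fin 2) (ZMod p)) *ᵥ e ≠ 0 := fun h => he <| by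
    simpa only [mulVec_mulVec, Units.inv_mul, one_mulVec, mulVec_zero] using
      congrArg (((g⁻¹ : GL (Fin 2) (ZMod p)) : Matrix (Fin 2) (Fin 2) (ZMod p)) *ᵥ ·) h
  obtain ⟨u, hu⟩ := exists_torusHom_mulVec_eq p b he hge
  refine ⟨torusHom p b u, ⟨u, rfl⟩, (torusHom p b u)⁻¹ * g, ?_, mul_inv_cancel_left _ _⟩
  have hfix : (((torusHom p b u)⁻¹ * g : GL (Fin 2) (ZMod p)) : Matrix _ _ _) *ᵥ e = e := by
    rw [Units.val_mul, ← mulVec_mulVec, ← hu, mulVec_mulVec, Units.inv_mul, one_mulVec]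
  rw [mulVec_single_one] at hfix
  exact (congrFun hfix 1).trans (Pi.single_eq_of_ne (by decide) _)

end TorusBorel

theorem stmt_14 (b : Basis (Fin 2) (ZMod p) (GaloisField p 2)) :
    (pr (Subgroup.normalizer (Tnonsplit p b : Set (GL (Fin 2) (ZMod p)))) + pr (Bplus p) - pr (⊤ : Subgroup (GL (Fin 2) (ZMod p))))
        * (pr (Subgroup.normalizer (Tnonsplit p b : Set (GL (Fin 2) (ZMod p)))) + pr (Bplus p) - pr ⊤)
      = pr (Subgroup.normalizer (Tnonsplit p b : Set (GL (Fin 2) (ZMod p)))) + pr (Bplus p) - pr ⊤ ∧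
    pr (Subgroup.normalizer (Tnonsplit p b : Set (GL (Fin 2) (ZMod p)))) * pr (Bplus p) = pr (⊤ : Subgroup (GL (Fin 2) (ZMod p))) ∧
    pr (Bplus p) * pr (Subgroup.normalizer (Tnonsplit p b : Set (GL (Fin 2) (ZMod p)))) = pr (⊤ : Subgroup (GL (Fin 2) (ZMod p))) := by
  set N := Subgroup.normalizer (Tnonsplit p b : Set (GL (Fin 2) (ZMod p)))
  have hNB_univ : (N : Set (GL (Fin 2) (ZMod p))) * (Bplus p : Set (GL (Fin 2) (ZMod p))) =
      Set.univ :=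
    Set.univ_subset_iff.mp <| Tnonsplit_mul_Bplus p b ▸
      Set.mul_subset_mul_right Subgroup.le_normalizer
  have hNB := pr_mul_pr_of_mul_eq_univ hNB_univ
  have hBN := pr_mul_pr_of_mul_eq_univ (Subgroup.coe_mul_coe_eq_univ_comm hNB_univ)
  refine ⟨?_, hNB, hBN⟩
  rw [← hNB]
  exact (isIdempotentElem_pr N).add_sub_mul_of_commute (hNB.trans hBN.symm)
    (isIdempotentElem_pr _)
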